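/- For two Laplace distributions with the same scale parameter b > 0 and means μ₁ and μ₂, the expected absolute difference of two independent random variables X ~ Laplace(μ₁, b) and Y ~ Laplace(μ₂, b) equals |μ₂ − μ₁| + (1/2)·e^(−|μ₂ − μ₁|/b)·(3b + |μ₂ − μ₁|). -/

import Mathlib

open MeasureTheory Real Set Filter Topology

lemma hasDerivAt_F (c A C : ℝ) (hc : c ≠ 0) (y : ℝ) :
    HasDerivAt (fun y : ℝ => -(c * (A + C * y) + C * c ^ 2) * Real.exp (-y / c))
      ((A + C * y) * Real.exp (-y / c)) y := by
  have hu : HasDerivAt (fun y : ℝ => -(c * (A + C * y) + C * c ^ 2)) (-(c * C)) y := by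
    have h := ((hasDerivAt_id y).const_mul (-(c*C))).add_const (-(c*A) - C*c^2)
    have heq : (fun y : ℝ => -(c * (A + C * y) + C * c ^ 2))
        = (fun y : ℝ => -(c*C) * id y + (-(c*A) - C*c^2)) := by funext y; simp [id]; ring
    rw [heq]
    simpa using h
  have hexp : HasDerivAt (fun y : ℝ => Real.exp (-y / c)) (Real.exp (-y/c) * (-1/c)) y := by
    have h : HasDerivAt (fun y : ℝ => -y / c) (-1/c) y := (hasDerivAt_neg y).div_const c
    exact (Real.hasDerivAt_exp _).comp y h
  have := hu.mul hexp
  refine this.congr_deriv ?_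
  field_simp
  ring

lemma tendsto_F (c A C : ℝ) (hc : 0 < c) :
    Tendsto (fun y : ℝ => -(c * (A + C * y) + C * c ^ 2) * Real.exp (-y / c)) atTop (nhds 0) := by
  have key0 : ∀ K : ℝ, Tendsto (fun y : ℝ => K * Real.exp (-y / c)) atTop (nhds 0) := by
    intro K
    have h : Tendsto (fun y : ℝ => -y / c) atTop atBot := by
      apply Tendsto.atBot_div_const hc
      exact tendsto_neg_atTop_atBot
    simpa using ((Real.tendsto_exp_atBot.comp h).const_mul K)
  have key1 : ∀ K : ℝ, Tendsto (fun y : ℝ => K * (y * Real.exp (-y / c))) atTop (nhds 0) := by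
    intro K
    have hdiv : Tendsto (fun y : ℝ => y / c) atTop atTop := tendsto_id.atTop_div_const hc
    have h := (Real.tendsto_pow_mul_exp_neg_atTop_nhds_zero 1).comp hdiv
    have h2 : Tendsto (fun y : ℝ => (K * c) * ((y / c) ^ 1 * Real.exp (-(y / c)))) atTop (nhds 0) := by
      simpa using h.const_mul (K * c)
    apply h2.congr
    intro y
    rw [neg_div]
    field_simp
  have := (key0 (-(c*A) - C*c^2)).add (key1 (-(c*C)))
  rw [add_zero] at this
  apply this.congr
  intro y
  ring

lemma integrableOn_linexp_Ioi (c A C a : ℝ) (hc : 0 < c)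
    (hpos : ∀ y ∈ Set.Ioi a, 0 ≤ A + C * y) :
    IntegrableOn (fun y : ℝ => (A + C * y) * Real.exp (-y / c)) (Set.Ioi a) :=
  integrableOn_Ioi_deriv_of_nonneg' (fun y _ => hasDerivAt_F c A C hc.ne' y)
    (fun y hy => mul_nonneg (hpos y hy) (Real.exp_nonneg _)) (tendsto_F c A C hc)

lemma integral_linexp_Ioi (c A C a : ℝ) (hc : 0 < c)
    (hpos : ∀ y ∈ Set.Ioi a, 0 ≤ A + C * y) :
    (∫ y in Set.Ioi a, (A + C * y) * Real.exp (-y / c))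
      = (c * (A + C * a) + C * c ^ 2) * Real.exp (-a / c) := by
  have h := integral_Ioi_of_hasDerivAt_of_nonneg' (fun y _ => hasDerivAt_F c A C hc.ne' y)
    (fun y hy => mul_nonneg (hpos y hy) (Real.exp_nonneg _)) (tendsto_F c A C hc)
  rw [h]; ring

lemma integrableOn_neg_comp {g : ℝ → ℝ} {a : ℝ} (hg : IntegrableOn g (Set.Ioi (-a))) :
    IntegrableOn (fun y => g (-y)) (Set.Iic a) := by
  have A : MeasurableEmbedding fun x : ℝ => -x :=
    (Homeomorph.neg ℝ).isClosedEmbedding.measurableEmbedding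
  have hpre : (fun x : ℝ => -x) ⁻¹' (Set.Iic a) = Set.Ici (-a) := by ext x; simp
  have hmap : (volume : Measure ℝ).restrict (Set.Iic a)
      = Measure.map (fun x : ℝ => -x) (volume.restrict (Set.Ici (-a))) := by
    conv_lhs => rw [show (volume : Measure ℝ) = Measure.map (fun x : ℝ => -x) volume from
      (Measure.map_neg_eq_self _).symm]
    rw [Measure.restrict_map A.measurable measurableSet_Iic, hpre]
  rw [IntegrableOn, hmap, A.integrable_map_iff]
  have : ((fun y => g (-y)) ∘ fun x : ℝ => -x) = g := by funext y; simp
  rw [this]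
  rwa [← integrableOn_Ici_iff_integrableOn_Ioi] at hg

lemma integrableOn_linexp_Iic (c A C a : ℝ) (hc : 0 < c)
    (hpos : ∀ y ∈ Set.Iic a, 0 ≤ A + C * y) :
    IntegrableOn (fun y : ℝ => (A + C * y) * Real.exp (y / c)) (Set.Iic a) := by
  have h := integrableOn_linexp_Ioi c A (-C) (-a) hc (by
    intro y hy
    have hy' : -a < y := hy
    have := hpos (-y) (by simp; linarith)
    linarith)
  have h2 := integrableOn_neg_comp h
  apply h2.congr_fun _ measurableSet_Iic
  intro y _
  simp only [neg_neg, mul_neg, neg_mul]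

lemma integral_linexp_Iic (c A C a : ℝ) (hc : 0 < c)
    (hpos : ∀ y ∈ Set.Iic a, 0 ≤ A + C * y) :
    (∫ y in Set.Iic a, (A + C * y) * Real.exp (y / c))
      = (c * (A + C * a) - C * c ^ 2) * Real.exp (a / c) := by
  have h := integral_comp_neg_Iic a (fun y => (A + -C * y) * Real.exp (-y / c))
  have h1 : (∫ y in Set.Iic a, (A + C * y) * Real.exp (y / c))
      = ∫ y in Set.Ioi (-a), (A + -C * y) * Real.exp (-y / c) := by
    rw [← h]
    apply setIntegral_congr_fun measurableSet_Iic
    intro y _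
    simp only [mul_neg, neg_neg, neg_mul]
  rw [h1, integral_linexp_Ioi c A (-C) (-a) hc (by
    intro y hy
    have hy' : -a < y := hy
    have := hpos (-y) (by simp; linarith)
    linarith)]
  simp only [neg_neg, mul_neg, neg_mul]
  ring_nf

-- piece integrability lemmas for J, t ≥ 0
lemma J_int_aux (b t : ℝ) (hb : 0 < b) (ht : 0 ≤ t) :
    Integrable (fun y : ℝ => |t - y| * Real.exp (-|y| / b)) := by
  have hcont : Continuous (fun y : ℝ => |t - y| * Real.exp (-|y| / b)) := by
    fun_prop
  have h1 : IntegrableOn (fun y : ℝ => |t - y| * Real.exp (-|y| / b)) (Set.Iic 0) := by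
    apply (integrableOn_linexp_Iic b t (-1) 0 hb (by intro y hy; simp at hy ⊢; linarith)).congr_fun
      _ measurableSet_Iic
    intro y hy
    simp only [Set.mem_Iic] at hy
    dsimp only
    rw [abs_of_nonneg (by linarith), abs_of_nonpos hy]
    ring_nf
  have h2 : IntegrableOn (fun y : ℝ => |t - y| * Real.exp (-|y| / b)) (Set.Ioc 0 t) :=
    hcont.integrableOn_Ioc
  have h3 : IntegrableOn (fun y : ℝ => |t - y| * Real.exp (-|y| / b)) (Set.Ioi t) := by
    apply (integrableOn_linexp_Ioi b (-t) 1 t hb (by intro y hy; simp at hy ⊢; linarith)).congr_fun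
      _ measurableSet_Ioi
    intro y hy
    simp only [Set.mem_Ioi] at hy
    dsimp only
    rw [abs_of_nonpos (by linarith), abs_of_nonneg (by linarith)]
    ring_nf
  have := h1.union (h2.union h3)
  rwa [Set.Ioc_union_Ioi_eq_Ioi ht, Set.Iic_union_Ioi, integrableOn_univ] at this

lemma J_val_aux (b t : ℝ) (hb : 0 < b) (ht : 0 ≤ t) :
    (∫ y : ℝ, |t - y| * Real.exp (-|y| / b))
      = 2 * b * t + 2 * b ^ 2 * Real.exp (-t / b) := by
  have hcont : Continuous (fun y : ℝ => |t - y| * Real.exp (-|y| / b)) := by fun_prop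
  have hint := J_int_aux b t hb ht
  rw [← integral_add_compl measurableSet_Iic hint, compl_Iic,
    ← Set.Ioc_union_Ioi_eq_Ioi ht,
    setIntegral_union (Set.Ioc_disjoint_Ioi le_rfl) measurableSet_Ioi
      (hint.integrableOn) (hint.integrableOn)]
  have e1 : (∫ y in Set.Iic (0:ℝ), |t - y| * Real.exp (-|y| / b)) = b * t + b ^ 2 := by
    rw [show (∫ y in Set.Iic (0:ℝ), |t - y| * Real.exp (-|y| / b))
        = ∫ y in Set.Iic (0:ℝ), (t + (-1) * y) * Real.exp (y / b) from
      setIntegral_congr_fun measurableSet_Iic (by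
        intro y hy
        simp only [Set.mem_Iic] at hy
        dsimp only
        rw [abs_of_nonneg (by linarith), abs_of_nonpos hy]
        ring_nf),
      integral_linexp_Iic b t (-1) 0 hb (by intro y hy; simp at hy ⊢; linarith)]
    simp
  have e3 : (∫ y in Set.Ioi t, |t - y| * Real.exp (-|y| / b)) = b ^ 2 * Real.exp (-t / b) := by
    rw [show (∫ y in Set.Ioi t, |t - y| * Real.exp (-|y| / b))
        = ∫ y in Set.Ioi t, ((-t) + 1 * y) * Real.exp (-y / b) from
      setIntegral_congr_fun measurableSet_Ioi (by
        intro y hy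
        simp only [Set.mem_Ioi] at hy
        dsimp only
        rw [abs_of_nonpos (by linarith), abs_of_nonneg (by linarith)]
        ring_nf),
      integral_linexp_Ioi b (-t) 1 t hb (by intro y hy; simp at hy ⊢; linarith)]
    ring
  have e2 : (∫ y in Set.Ioc 0 t, |t - y| * Real.exp (-|y| / b))
      = b ^ 2 * Real.exp (-t / b) + b * t - b ^ 2 := by
    have hfe : Set.EqOn (fun y : ℝ => |t - y| * Real.exp (-|y| / b))
        (fun y : ℝ => (t + (-1) * y) * Real.exp (-y / b)) (Set.Ioc 0 t) := by
      intro y hy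
      simp only [Set.mem_Ioc] at hy
      simp only
      rw [abs_of_nonneg (by linarith), abs_of_nonneg (by linarith)]
      ring_nf
    rw [setIntegral_congr_fun measurableSet_Ioc hfe,
      ← intervalIntegral.integral_of_le ht,
      intervalIntegral.integral_eq_sub_of_hasDerivAt
        (fun y _ => hasDerivAt_F b t (-1) hb.ne' y)
        (by apply Continuous.intervalIntegrable; fun_prop)]
    simp only [mul_neg, neg_mul, neg_neg, neg_zero, zero_div]
    rw [Real.exp_zero]
    ring_nf
  rw [e1, e2, e3]
  ring

lemma J_int (b t : ℝ) (hb : 0 < b) :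
    Integrable (fun y : ℝ => |t - y| * Real.exp (-|y| / b)) := by
  rcases le_or_gt 0 t with ht | ht
  · exact J_int_aux b t hb ht
  · have h := J_int_aux b (-t) hb (by linarith)
    have h2 := (integrable_comp_mul_left_iff
      (fun y : ℝ => |(-t) - y| * Real.exp (-|y| / b)) (R := -1) (by norm_num)).mpr h
    apply h2.congr
    filter_upwards with y
    simp only [neg_one_mul, abs_neg]
    rw [show -t - -y = -(t - y) by ring, abs_neg]

lemma J_val (b t : ℝ) (hb : 0 < b) :
    (∫ y : ℝ, |t - y| * Real.exp (-|y| / b))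
      = 2 * b * |t| + 2 * b ^ 2 * Real.exp (-|t| / b) := by
  rcases le_or_gt 0 t with ht | ht
  · rw [J_val_aux b t hb ht, abs_of_nonneg ht]
  · have h := J_val_aux b (-t) hb (by linarith)
    rw [abs_of_neg ht]
    rw [← h, ← integral_neg_eq_self]
    congr 1
    funext y
    simp only [abs_neg]
    rw [show t - -y = -(-t - y) by ring, abs_neg]

lemma K_int_aux (b d : ℝ) (hb : 0 < b) (hd : 0 ≤ d) :
    Integrable (fun x : ℝ => Real.exp (-(|x| + |x - d|) / b)) := by
  have hb2 : (0:ℝ) < b / 2 := by linarith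
  have h1 : IntegrableOn (fun x : ℝ => Real.exp (-(|x| + |x - d|) / b)) (Set.Iic 0) := by
    have base : IntegrableOn
        (fun x : ℝ => Real.exp (-d / b) * ((1 + 0 * x) * Real.exp (x / (b / 2)))) (Set.Iic 0) :=
      (integrableOn_linexp_Iic (b/2) 1 0 0 hb2 (by intro y hy; norm_num)).const_mul _
    apply base.congr_fun _ measurableSet_Iic
    intro x hx
    simp only [Set.mem_Iic] at hx
    dsimp only
    rw [abs_of_nonpos hx, abs_of_nonpos (by linarith),
      show (1 + 0 * x : ℝ) = 1 by ring, one_mul, ← Real.exp_add]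
    congr 1
    field_simp
    ring
  have h2 : IntegrableOn (fun x : ℝ => Real.exp (-(|x| + |x - d|) / b)) (Set.Ioc 0 d) := by
    have : Continuous (fun x : ℝ => Real.exp (-(|x| + |x - d|) / b)) := by fun_prop
    exact this.integrableOn_Ioc
  have h3 : IntegrableOn (fun x : ℝ => Real.exp (-(|x| + |x - d|) / b)) (Set.Ioi d) := by
    have base : IntegrableOn
        (fun x : ℝ => Real.exp (d / b) * ((1 + 0 * x) * Real.exp (-x / (b / 2)))) (Set.Ioi d) :=
      (integrableOn_linexp_Ioi (b/2) 1 0 d hb2 (by intro y hy; norm_num)).const_mul _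
    apply base.congr_fun _ measurableSet_Ioi
    intro x hx
    simp only [Set.mem_Ioi] at hx
    dsimp only
    rw [abs_of_nonneg (by linarith), abs_of_nonneg (by linarith),
      show (1 + 0 * x : ℝ) = 1 by ring, one_mul, ← Real.exp_add]
    congr 1
    field_simp
    ring
  have := h1.union (h2.union h3)
  rwa [Set.Ioc_union_Ioi_eq_Ioi hd, Set.Iic_union_Ioi, integrableOn_univ] at this

lemma K_val_aux (b d : ℝ) (hb : 0 < b) (hd : 0 ≤ d) :
    (∫ x : ℝ, Real.exp (-(|x| + |x - d|) / b)) = (d + b) * Real.exp (-d / b) := by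
  have hb2 : (0:ℝ) < b / 2 := by linarith
  have hint := K_int_aux b d hb hd
  rw [← integral_add_compl measurableSet_Iic hint, compl_Iic,
    ← Set.Ioc_union_Ioi_eq_Ioi hd,
    setIntegral_union (Set.Ioc_disjoint_Ioi le_rfl) measurableSet_Ioi
      (hint.integrableOn) (hint.integrableOn)]
  have e1 : (∫ x in Set.Iic (0:ℝ), Real.exp (-(|x| + |x - d|) / b))
      = (b / 2) * Real.exp (-d / b) := by
    rw [show (∫ x in Set.Iic (0:ℝ), Real.exp (-(|x| + |x - d|) / b))
        = ∫ x in Set.Iic (0:ℝ), Real.exp (-d / b) * ((1 + 0 * x) * Real.exp (x / (b/2))) from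
      setIntegral_congr_fun measurableSet_Iic (by
        intro x hx
        simp only [Set.mem_Iic] at hx
        dsimp only
        rw [abs_of_nonpos hx, abs_of_nonpos (by linarith),
          show (1 + 0 * x : ℝ) = 1 by ring, one_mul, ← Real.exp_add]
        congr 1
        field_simp
        ring),
      integral_const_mul, integral_linexp_Iic (b/2) 1 0 0 hb2 (by intro y hy; norm_num)]
    rw [show (b / 2 * (1 + 0 * 0) - 0 * (b / 2) ^ 2 : ℝ) = b / 2 by ring, zero_div,
      Real.exp_zero]
    ring
  have e2 : (∫ x in Set.Ioc 0 d, Real.exp (-(|x| + |x - d|) / b))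
      = d * Real.exp (-d / b) := by
    rw [show (∫ x in Set.Ioc 0 d, Real.exp (-(|x| + |x - d|) / b))
        = ∫ x in Set.Ioc 0 d, Real.exp (-d / b) from
      setIntegral_congr_fun measurableSet_Ioc (by
        intro x hx
        simp only [Set.mem_Ioc] at hx
        dsimp only
        rw [abs_of_nonneg (by linarith), abs_of_nonpos (by linarith)]
        congr 1
        ring),
      setIntegral_const]
    simp [Real.volume_Ioc, ENNReal.toReal_ofReal hd, hd]
  have e3 : (∫ x in Set.Ioi d, Real.exp (-(|x| + |x - d|) / b))
      = (b / 2) * Real.exp (-d / b) := by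
    rw [show (∫ x in Set.Ioi d, Real.exp (-(|x| + |x - d|) / b))
        = ∫ x in Set.Ioi d, Real.exp (d / b) * ((1 + 0 * x) * Real.exp (-x / (b/2))) from
      setIntegral_congr_fun measurableSet_Ioi (by
        intro x hx
        simp only [Set.mem_Ioi] at hx
        dsimp only
        rw [abs_of_nonneg (by linarith), abs_of_nonneg (by linarith),
          show (1 + 0 * x : ℝ) = 1 by ring, one_mul, ← Real.exp_add]
        congr 1
        field_simp
        ring),
      integral_const_mul, integral_linexp_Ioi (b/2) 1 0 d hb2 (by intro y hy; norm_num)]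
    rw [show (b / 2 * (1 + 0 * d) + 0 * (b / 2) ^ 2 : ℝ) = b / 2 by ring,
      show Real.exp (d / b) * (b / 2 * Real.exp (-d / (b / 2)))
        = b / 2 * (Real.exp (d / b) * Real.exp (-d / (b / 2))) by ring,
      ← Real.exp_add,
      show d / b + -d / (b / 2) = -d / b by field_simp; ring]
  rw [e1, e2, e3]
  ring

lemma K_int (b d : ℝ) (hb : 0 < b) :
    Integrable (fun x : ℝ => Real.exp (-(|x| + |x - d|) / b)) := by
  rcases le_or_gt 0 d with hd | hd
  · exact K_int_aux b d hb hd
  · have h := K_int_aux b (-d) hb (by linarith)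
    have h2 := (integrable_comp_mul_left_iff
      (fun x : ℝ => Real.exp (-(|x| + |x - -d|) / b)) (R := -1) (by norm_num)).mpr h
    apply h2.congr
    filter_upwards with x
    have h1 : |-1 * x| = |x| := by rw [neg_one_mul, abs_neg]
    have h3 : |-1 * x - -d| = |x - d| := by
      rw [neg_one_mul, show -x - -d = -(x - d) by ring, abs_neg]
    rw [h1, h3]
  
lemma K_val (b d : ℝ) (hb : 0 < b) :
    (∫ x : ℝ, Real.exp (-(|x| + |x - d|) / b)) = (|d| + b) * Real.exp (-|d| / b) := by
  rcases le_or_gt 0 d with hd | hd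
  · rw [K_val_aux b d hb hd, abs_of_nonneg hd]
  · have h := K_val_aux b (-d) hb (by linarith)
    rw [abs_of_neg hd, ← h, ← integral_neg_eq_self]
    congr 1
    funext x
    simp only [abs_neg]
    rw [show -x - d = -(x - -d) by ring, abs_neg]

/-- Łukaszyk–Karmowski expected distance between two independent Laplace
random variables with common scale `b > 0` and means `μ₁`, `μ₂`. -/
theorem lk_laplace_expected_distance (b μ₁ μ₂ : ℝ) (hb : 0 < b) :
    (∫ x : ℝ, ∫ y : ℝ,
        |x - y| * ((1 / (2 * b)) * Real.exp (-|x - μ₁| / b))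
          * ((1 / (2 * b)) * Real.exp (-|y - μ₂| / b)))
      = |μ₂ - μ₁| + (1 / 2) * Real.exp (-|μ₂ - μ₁| / b) * (3 * b + |μ₂ - μ₁|) := by
  have hb' : b ≠ 0 := hb.ne'
  -- Step 1: inner integral
  have hinner : ∀ x : ℝ,
      (∫ y : ℝ, |x - y| * ((1 / (2 * b)) * Real.exp (-|x - μ₁| / b))
          * ((1 / (2 * b)) * Real.exp (-|y - μ₂| / b)))
        = (1 / (2 * b)) * (|x - μ₂| * Real.exp (-|x - μ₁| / b))
          + (1 / 2) * Real.exp (-(|x - μ₁| + |x - μ₂|) / b) := by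
    intro x
    have hre : (fun y : ℝ => |x - y| * ((1 / (2 * b)) * Real.exp (-|x - μ₁| / b))
          * ((1 / (2 * b)) * Real.exp (-|y - μ₂| / b)))
        = fun y : ℝ => ((1 / (2 * b)) * Real.exp (-|x - μ₁| / b) * (1 / (2 * b)))
            * (|(x - μ₂) - (y - μ₂)| * Real.exp (-|y - μ₂| / b)) := by
      funext y
      rw [show (x - μ₂) - (y - μ₂) = x - y by ring]
      ring
    rw [hre, integral_const_mul]
    have hshift := integral_sub_right_eq_self (μ := volume)
      (fun z : ℝ => |(x - μ₂) - z| * Real.exp (-|z| / b)) μ₂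
    rw [hshift, J_val b (x - μ₂) hb,
      show -(|x - μ₁| + |x - μ₂|) / b = -|x - μ₁| / b + -|x - μ₂| / b by ring,
      Real.exp_add]
    field_simp
  rw [integral_congr_ae (Filter.Eventually.of_forall hinner)]
  -- Step 2: split outer integral
  have hf1 : Integrable (fun x : ℝ => (1 / (2 * b)) * (|x - μ₂| * Real.exp (-|x - μ₁| / b))) := by
    have h := (J_int b (μ₂ - μ₁) hb).comp_sub_right μ₁
    have h2 := h.const_mul (1 / (2 * b))
    apply h2.congr
    filter_upwards with x
    rw [show μ₂ - μ₁ - (x - μ₁) = μ₂ - x by ring, abs_sub_comm μ₂ x]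
  have hf2 : Integrable (fun x : ℝ => (1 / 2) * Real.exp (-(|x - μ₁| + |x - μ₂|) / b)) := by
    have h := (K_int b (μ₂ - μ₁) hb).comp_sub_right μ₁
    have h2 := h.const_mul (1 / 2 : ℝ)
    apply h2.congr
    filter_upwards with x
    rw [show x - μ₁ - (μ₂ - μ₁) = x - μ₂ by ring]
  rw [integral_add hf1 hf2, integral_const_mul, integral_const_mul]
  -- evaluate the two integrals
  have hI1 : (∫ x : ℝ, |x - μ₂| * Real.exp (-|x - μ₁| / b))
      = 2 * b * |μ₂ - μ₁| + 2 * b ^ 2 * Real.exp (-|μ₂ - μ₁| / b) := by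
    have hshift := integral_sub_right_eq_self (μ := volume)
      (fun z : ℝ => |(μ₂ - μ₁) - z| * Real.exp (-|z| / b)) μ₁
    rw [← J_val b (μ₂ - μ₁) hb, ← hshift]
    apply integral_congr_ae (Filter.Eventually.of_forall _)
    intro x
    rw [show μ₂ - μ₁ - (x - μ₁) = μ₂ - x by ring, abs_sub_comm μ₂ x]
  have hI2 : (∫ x : ℝ, Real.exp (-(|x - μ₁| + |x - μ₂|) / b))
      = (|μ₂ - μ₁| + b) * Real.exp (-|μ₂ - μ₁| / b) := by
    have hshift := integral_sub_right_eq_self (μ := volume)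
      (fun z : ℝ => Real.exp (-(|z| + |z - (μ₂ - μ₁)|) / b)) μ₁
    rw [← K_val b (μ₂ - μ₁) hb, ← hshift]
    apply integral_congr_ae (Filter.Eventually.of_forall _)
    intro x
    rw [show x - μ₁ - (μ₂ - μ₁) = x - μ₂ by ring]
  rw [hI1, hI2]
  field_simp
  ring
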